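/- arXiv:math/0411111 — 3 statements merged into one kernel-verified Lean document; each statement's English description precedes it below -/
import Mathlib

section
/- Fix integers n ≥ 1, r ≥ 1, s ≥ 0. Let A_1,…,A_r and Ω_0,…,Ω_s be n×n matrices with entries in ℂ[[Q^1,…,Q^r,t^0,…,t^s]] (in particular independent of ħ) such that the operators ∇^a := ħ Q^a ∂/∂Q^a + A_a and ∇_i := ħ ∂/∂t^i + Ω_i pairwise commute. Then the unique fundamental solution L ∈ M_n(ℂ((ħ^{-1}))[[Q,t]]) (satisfying ħ ∂L/∂t^i + Ω_i L = 0, ħ Q^a ∂L/∂Q^a + A_a L − L p_a = 0 with p_a := A_a|_{Q=t=0}, and L|_{Q=t=0} = Id_n) satisfies L − Id_n ∈ ħ^{-1} M_n(ℂ[[ħ^{-1}]][[Q,t]]); that is, L = Id + O(ħ^{-1}), with no positive powers of ħ occurring. -/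
noncomputable section

/-- `ℂ((ħ⁻¹))`, realized as formal Laurent series (Hahn series over `ℤ`) in the
variable `X = ħ⁻¹`; the coefficient of `ħ^k` is the coefficient at `z = -k`. -/
abbrev LH : Type := LaurentSeries ℂ

/-- The element `ħ = X⁻¹`: the Hahn series with single coefficient `1` in degree `-1`. -/
def hbar : LH := HahnSeries.single (-1 : ℤ) 1

/-- `f` lies in the subring `ℂ[ħ]` (no positive powers of the variable `X = ħ⁻¹`). -/
def InPolyH (f : LH) : Prop := ∀ z : ℤ, 0 < z → f.coeff z = 0

/-- `f` lies in the subring `ℂ[[ħ⁻¹]]`. -/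
def InPSinv (f : LH) : Prop := ∀ z : ℤ, z < 0 → f.coeff z = 0

/-- `f` lies in `ħ⁻¹ · ℂ[[ħ⁻¹]]` (only strictly negative powers of `ħ`). -/
def InPSinvPos (f : LH) : Prop := ∀ z : ℤ, z ≤ 0 → f.coeff z = 0

/-- `f` is a constant (a complex scalar), i.e. independent of `ħ`. -/
def IsConstL (f : LH) : Prop := ∀ z : ℤ, z ≠ 0 → f.coeff z = 0

section ops

variable {σ R : Type} [CommRing R] {n : ℕ}

/-- Formal partial derivative `∂/∂x` on multivariate formal power series. -/
def pd (x : σ) (f : MvPowerSeries σ R) : MvPowerSeries σ R :=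
  fun d => ((d x + 1 : ℕ) : R) * MvPowerSeries.coeff (R := R) (d + Finsupp.single x 1) f

/-- Euler derivative `x·∂/∂x` on multivariate formal power series. -/
def eulerD (x : σ) (f : MvPowerSeries σ R) : MvPowerSeries σ R :=
  fun d => ((d x : ℕ) : R) * MvPowerSeries.coeff (R := R) d f

/-- Entrywise partial derivative of a matrix of power series. -/
def mpd (x : σ) (M : Matrix (Fin n) (Fin n) (MvPowerSeries σ R)) :
    Matrix (Fin n) (Fin n) (MvPowerSeries σ R) := M.map (pd x)

/-- Entrywise Euler derivative of a matrix of power series. -/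
def meu (x : σ) (M : Matrix (Fin n) (Fin n) (MvPowerSeries σ R)) :
    Matrix (Fin n) (Fin n) (MvPowerSeries σ R) := M.map (eulerD x)

/-- A constant matrix, viewed as a matrix of power series. -/
def mC (M : Matrix (Fin n) (Fin n) R) : Matrix (Fin n) (Fin n) (MvPowerSeries σ R) :=
  M.map (MvPowerSeries.C (σ := σ) (R := R))

/-- Constant term (restriction to `Q = t = 0`) of a matrix of power series. -/
def m0 (M : Matrix (Fin n) (Fin n) (MvPowerSeries σ R)) : Matrix (Fin n) (Fin n) R :=
  M.map (MvPowerSeries.constantCoeff (σ := σ) (R := R))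

end ops

section lops

variable {σ : Type} {n : ℕ}

/-- The scalar `ħ` inside `ℂ((ħ⁻¹))[[Q,t]]`. -/
def hbarC (σ : Type) : MvPowerSeries σ LH := MvPowerSeries.C (σ := σ) (R := LH) hbar

/-- The entries of the matrix `M` lie in `ℂ[ħ][[Q,t]]`. -/
def MatPolyH (M : Matrix (Fin n) (Fin n) (MvPowerSeries σ LH)) : Prop :=
  ∀ (i j : Fin n) (d : σ →₀ ℕ), InPolyH (MvPowerSeries.coeff (R := LH) d (M i j))

/-- The entries of the matrix `M` lie in `ℂ[[Q,t]]`, i.e. are independent of `ħ`. -/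
def MatNoH (M : Matrix (Fin n) (Fin n) (MvPowerSeries σ LH)) : Prop :=
  ∀ (i j : Fin n) (d : σ →₀ ℕ), IsConstL (MvPowerSeries.coeff (R := LH) d (M i j))

/-- The first-order operator `v ↦ ħ·(x ∂/∂x)v + A·v` on column vectors. -/
def nablaE (x : σ) (A : Matrix (Fin n) (Fin n) (MvPowerSeries σ LH))
    (v : Fin n → MvPowerSeries σ LH) : Fin n → MvPowerSeries σ LH :=
  fun i => hbarC σ * eulerD x (v i) + A.mulVec v i

/-- The first-order operator `v ↦ ħ·(∂/∂x)v + A·v` on column vectors. -/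
def nablaP (x : σ) (A : Matrix (Fin n) (Fin n) (MvPowerSeries σ LH))
    (v : Fin n → MvPowerSeries σ LH) : Fin n → MvPowerSeries σ LH :=
  fun i => hbarC σ * pd x (v i) + A.mulVec v i

end lops

/-!
Compare, in the two systems of equations satisfied by `L`, the coefficients of a monomial `d` in
`Q, t` and of a power of `ħ`. Since `A_a` and `Ω_i` do not involve `ħ`, multiplying by them keeps
the power of `ħ`, while the factor `ħ` in front of the derivatives raises it by one.

Argue by well-founded induction on `d`: the coefficients `L_q` of all smaller monomials `q` lie in
`ℂ[[ħ⁻¹]]`. If `d` contains some `t^i`, the `t^i`-equation at `d - e_i` expresses `ħ L_d` through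
the `L_q`, so `L_d ∈ ħ⁻¹ ℂ[[ħ⁻¹]]`. Otherwise `d` contains some `Q^a`, and the `Q^a`-equation at `d`
reads `d_a ħ L_d + [p_a, L_d] = (terms in the L_q)`. Its coefficient of `ħ^k`, `k ≥ 1`, shows that
if `L_d` has no `ħ^k`-term then it has no `ħ^(k-1)`-term either; as the `ħ`-powers of the Laurent
series `L_d` are bounded above, a descending induction leaves no `ħ^k` with `k ≥ 0`.
-/

open MvPowerSeries Finset

theorem Int.forall_le_of_forall_lt_of_succ {P : ℤ → Prop} {m : ℤ} (N : ℤ)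
    (hlow : ∀ z < N, P z) (hsucc : ∀ z < m, P z → P (z + 1)) : ∀ z ≤ m, P z := by
  intro z hz
  rcases lt_or_ge z N with hzN | hNz
  · exact hlow z hzN
  induction z, hNz using Int.leInduction with
  | base => simpa using hsucc (N - 1) (by omega) (hlow (N - 1) (by omega))
  | succ z _ ih => exact hsucc z (by omega) (ih (by omega))

theorem IsConstL.coeff_mul {g : LH} (hg : IsConstL g) (f : LH) (z : ℤ) :
    (g * f).coeff z = g.coeff 0 * f.coeff z := by
  have hg_single : g = HahnSeries.single 0 (g.coeff 0) := by
    ext w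
    by_cases hw : w = 0
    · simp [hw]
    · rw [hg w hw, HahnSeries.coeff_single_of_ne hw]
  rw [hg_single, HahnSeries.coeff_single_zero_mul, HahnSeries.coeff_single_same]

theorem coeff_hbar_mul (f : LH) (z : ℤ) : (hbar * f).coeff z = f.coeff (z + 1) := by
  simp [hbar, HahnSeries.coeff_single_mul]

theorem coeff_natCast_mul (m : ℕ) (f : LH) (z : ℤ) : ((m : LH) * f).coeff z = m * f.coeff z := by
  simp [← nsmul_eq_mul]

theorem coeff_eulerD {σ R : Type} [CommRing R] (d : σ →₀ ℕ) (x : σ) (f : MvPowerSeries σ R) :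
    coeff d (eulerD x f) = (d x : R) * coeff d f := rfl

theorem coeff_pd {σ R : Type} [CommRing R] (d : σ →₀ ℕ) (x : σ) (f : MvPowerSeries σ R) :
    coeff d (pd x f) = ((d x + 1 : ℕ) : R) * coeff (d + Finsupp.single x 1) f := rfl

section CoeffMat

variable {σ : Type} {n : ℕ}

/-- The matrix of coefficients of the monomial `d` and of `ħ^(-z)` in the entries of `M`. -/
def coeffMat (d : σ →₀ ℕ) (z : ℤ) (M : Matrix (Fin n) (Fin n) (MvPowerSeries σ LH)) :
    Matrix (Fin n) (Fin n) ℂ :=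
  M.map fun f => (coeff d f).coeff z

theorem coeffMat_apply (d : σ →₀ ℕ) (z : ℤ) (M : Matrix (Fin n) (Fin n) (MvPowerSeries σ LH))
    (i j : Fin n) : coeffMat d z M i j = (coeff d (M i j)).coeff z := rfl

variable (d : σ →₀ ℕ) (z : ℤ) (M N : Matrix (Fin n) (Fin n) (MvPowerSeries σ LH))

theorem coeffMat_add : coeffMat d z (M + N) = coeffMat d z M + coeffMat d z N := by
  ext; simp [coeffMat_apply]

theorem coeffMat_sub : coeffMat d z (M - N) = coeffMat d z M - coeffMat d z N := by
  ext; simp [coeffMat_apply]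

theorem coeffMat_zero : coeffMat d z (0 : Matrix (Fin n) (Fin n) (MvPowerSeries σ LH)) = 0 := by
  ext; simp [coeffMat_apply]

theorem coeffMat_one_of_ne_zero {d : σ →₀ ℕ} {z : ℤ} (h : d ≠ 0 ∨ z ≠ 0) :
    coeffMat d z (1 : Matrix (Fin n) (Fin n) (MvPowerSeries σ LH)) = 0 := by
  classical
  ext i j
  rcases eq_or_ne i j with rfl | hij
  · rw [coeffMat_apply, Matrix.one_apply_eq, MvPowerSeries.coeff_one]
    split_ifs with hd
    · exact HahnSeries.coeff_single_of_ne (h.resolve_left (not_not.mpr hd))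
    · rfl
  · simp [coeffMat_apply, hij]

theorem coeffMat_zero_left : coeffMat 0 z M = (m0 M).map fun f => f.coeff z := by
  ext; simp [coeffMat_apply, m0]

theorem coeffMat_hbarC_smul : coeffMat d z (hbarC σ • M) = coeffMat d (z + 1) M := by
  ext; simp [coeffMat_apply, hbarC, coeff_C_mul, coeff_hbar_mul]

theorem coeffMat_meu (x : σ) : coeffMat d z (meu x M) = (d x : ℂ) • coeffMat d z M := by
  ext
  simp only [coeffMat_apply, meu, Matrix.map_apply, Matrix.smul_apply, coeff_eulerD,
    coeff_natCast_mul, smul_eq_mul]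

theorem coeffMat_mpd (x : σ) :
    coeffMat d z (mpd x M) = ((d x + 1 : ℕ) : ℂ) • coeffMat (d + Finsupp.single x 1) z M := by
  ext
  simp only [coeffMat_apply, mpd, Matrix.map_apply, Matrix.smul_apply, coeff_pd,
    coeff_natCast_mul, smul_eq_mul]

theorem coeffMat_mul_of_matNoH [DecidableEq σ] {B : Matrix (Fin n) (Fin n) (MvPowerSeries σ LH)}
    (hB : MatNoH B) :
    coeffMat d z (B * M) = ∑ p ∈ antidiagonal d, coeffMat p.1 0 B * coeffMat p.2 z M := by
  ext i j
  simp only [coeffMat_apply, Matrix.mul_apply, map_sum, coeff_mul, HahnSeries.coeff_sum,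
    (hB _ _ _).coeff_mul, Matrix.sum_apply]
  exact Finset.sum_comm

theorem coeffMat_mul_mC {X : Matrix (Fin n) (Fin n) LH} (hX : ∀ k l, IsConstL (X k l)) :
    coeffMat d z (M * mC X) = coeffMat d z M * X.map fun f => f.coeff 0 := by
  ext i j
  simp only [coeffMat_apply, Matrix.mul_apply, mC, Matrix.map_apply, map_sum, coeff_mul_C,
    HahnSeries.coeff_sum, mul_comm _ (X _ j), (hX _ _).coeff_mul]
  exact Finset.sum_congr rfl fun _ _ => mul_comm _ _

theorem exists_coeffMat_eq_zero_of_lt : ∃ N, ∀ z < N, coeffMat d z M = 0 := by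
  obtain ⟨N, hN⟩ := Finite.exists_ge fun p : Fin n × Fin n => (coeff d (M p.1 p.2)).order
  exact ⟨N, fun z hz => Matrix.ext fun i j =>
    HahnSeries.coeff_eq_zero_of_lt_order (hz.trans_le (hN (i, j)))⟩

end CoeffMat

theorem Matrix.sum_antidiagonal_mul_eq_zero {M m R : Type*} [AddCommMonoid M] [PartialOrder M]
    [CanonicallyOrderedAdd M] [HasAntidiagonal M] [Fintype m] [NonUnitalNonAssocSemiring R] {d : M}
    (X Y : M → Matrix m m R) (hY : ∀ q ≤ d, Y q = 0) : ∑ p ∈ antidiagonal d, X p.1 * Y p.2 = 0 :=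
  Finset.sum_eq_zero fun _ hp => by rw [hY _ (HasAntidiagonal.antidiagonal.snd_le hp), mul_zero]

section Recursion

variable {σ : Type} [DecidableEq σ] {n : ℕ} {x : σ}
  {L B : Matrix (Fin n) (Fin n) (MvPowerSeries σ LH)}

theorem coeffMat_recursion_of_pd (hB : MatNoH B) (h : hbarC σ • mpd x L + B * L = 0)
    (d : σ →₀ ℕ) (z : ℤ) :
    ((d x + 1 : ℕ) : ℂ) • coeffMat (d + Finsupp.single x 1) (z + 1) L
      + ∑ p ∈ antidiagonal d, coeffMat p.1 0 B * coeffMat p.2 z L = 0 := by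
  simpa [coeffMat_add, coeffMat_hbarC_smul, coeffMat_mpd, coeffMat_mul_of_matNoH (hB := hB),
    coeffMat_zero] using congrArg (coeffMat d z) h

theorem coeffMat_recursion_of_eulerD (hB : MatNoH B)
    (h : hbarC σ • meu x L + B * L - L * mC (m0 B) = 0) (d : σ →₀ ℕ) (z : ℤ) :
    (d x : ℂ) • coeffMat d (z + 1) L
      + ∑ p ∈ antidiagonal d, coeffMat p.1 0 B * coeffMat p.2 z L
      - coeffMat d z L * (m0 B).map (fun f => f.coeff 0) = 0 := by
  have hB0 : ∀ k l, IsConstL (m0 B k l) := fun k l => by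
    simpa [m0, coeff_zero_eq_constantCoeff_apply] using hB k l 0
  simpa [coeffMat_add, coeffMat_sub, coeffMat_hbarC_smul, coeffMat_meu,
    coeffMat_mul_of_matNoH (hB := hB), coeffMat_mul_mC (hX := hB0), coeffMat_zero]
    using congrArg (coeffMat d z) h

theorem coeffMat_eq_zero_of_pd (hB : MatNoH B) (h : hbarC σ • mpd x L + B * L = 0)
    {d : σ →₀ ℕ} (hd : d x ≠ 0) (hlow : ∀ q < d, ∀ z < 0, coeffMat q z L = 0) :
    ∀ z ≤ 0, coeffMat d z L = 0 := by
  intro z hz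
  obtain ⟨d', rfl⟩ : ∃ d', d = d' + Finsupp.single x 1 :=
    ⟨d - Finsupp.single x 1, (tsub_add_cancel_of_le (Finsupp.single_le_iff.mpr
      (Nat.one_le_iff_ne_zero.mpr hd))).symm⟩
  have hlt : ∀ q ≤ d', q < d' + Finsupp.single x 1 := fun q hq =>
    hq.trans_lt (lt_add_of_pos_right _ (by simp [pos_iff_ne_zero]))
  have hrec := coeffMat_recursion_of_pd hB h d' (z - 1)
  rw [sub_add_cancel, Matrix.sum_antidiagonal_mul_eq_zero (fun q => coeffMat q 0 B) _
    fun q hq => hlow q (hlt q hq) (z - 1) (by omega), add_zero] at hrec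
  exact (smul_eq_zero.mp hrec).resolve_left (Nat.cast_ne_zero.mpr (Nat.succ_ne_zero _))

theorem coeffMat_eq_zero_of_eulerD (hB : MatNoH B)
    (h : hbarC σ • meu x L + B * L - L * mC (m0 B) = 0)
    {d : σ →₀ ℕ} (hd : d x ≠ 0) (hlow : ∀ q < d, ∀ z < 0, coeffMat q z L = 0) :
    ∀ z ≤ 0, coeffMat d z L = 0 := by
  obtain ⟨N, hN⟩ := exists_coeffMat_eq_zero_of_lt d L
  refine Int.forall_le_of_forall_lt_of_succ N hN fun z hz hLz => ?_
  have hrec := coeffMat_recursion_of_eulerD hB h d z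
  rw [Matrix.sum_antidiagonal_mul_eq_zero (fun q => coeffMat q 0 B) _ fun q hq => (hq.lt_or_eq.elim
    (fun hq => hlow q hq z hz) fun hq => hq ▸ hLz), hLz, zero_mul, add_zero, sub_zero] at hrec
  exact (smul_eq_zero.mp hrec).resolve_left (Nat.cast_ne_zero.mpr hd)

end Recursion

theorem coeffMat_fundamentalSolution_sub_one_eq_zero {ι κ : Type} {n : ℕ}
    {A : ι → Matrix (Fin n) (Fin n) (MvPowerSeries (ι ⊕ κ) LH)}
    {Ω : κ → Matrix (Fin n) (Fin n) (MvPowerSeries (ι ⊕ κ) LH)}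
    {L : Matrix (Fin n) (Fin n) (MvPowerSeries (ι ⊕ κ) LH)}
    (hA : ∀ a, MatNoH (A a)) (hΩ : ∀ i, MatNoH (Ω i))
    (hLt : ∀ i, hbarC (ι ⊕ κ) • mpd (Sum.inr i) L + Ω i * L = 0)
    (hLq : ∀ a, hbarC (ι ⊕ κ) • meu (Sum.inl a) L + A a * L - L * mC (m0 (A a)) = 0)
    (hL0 : m0 L = 1) (d : (ι ⊕ κ) →₀ ℕ) : ∀ z ≤ 0, coeffMat d z (L - 1) = 0 := by
  classical
  induction d using WellFoundedLT.induction with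
  | _ d ih =>
  have hlow : ∀ q < d, ∀ z < 0, coeffMat q z L = 0 := fun q hq z hz => by
    simpa [coeffMat_sub, coeffMat_one_of_ne_zero (Or.inr hz.ne), sub_eq_zero] using ih q hq z hz.le
  intro z hz
  rcases eq_or_ne d 0 with rfl | hd
  · have hm0 : m0 (1 : Matrix (Fin n) (Fin n) (MvPowerSeries (ι ⊕ κ) LH)) = 1 :=
      Matrix.map_one _ (map_zero _) (map_one _)
    rw [coeffMat_sub, coeffMat_zero_left, coeffMat_zero_left, hL0, hm0, sub_self]
  rw [coeffMat_sub, coeffMat_one_of_ne_zero (Or.inl hd), sub_zero]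
  obtain ⟨x, hx⟩ : ∃ x, d x ≠ 0 := DFunLike.ne_iff.mp hd
  cases x with
  | inl a => exact coeffMat_eq_zero_of_eulerD (hA a) (hLq a) hx hlow z hz
  | inr i => exact coeffMat_eq_zero_of_pd (hΩ i) (hLt i) hx hlow z hz

theorem statement1_general (n r s : ℕ)
    (A : Fin r → Matrix (Fin n) (Fin n) (MvPowerSeries (Fin r ⊕ Fin (s + 1)) LH))
    (Ω : Fin (s + 1) → Matrix (Fin n) (Fin n) (MvPowerSeries (Fin r ⊕ Fin (s + 1)) LH))
    -- the connection matrices have entries in `ℂ[[Q,t]]`, i.e. are independent of `ħ`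
    (hA : ∀ a, MatNoH (A a)) (hΩ : ∀ i, MatNoH (Ω i))
    -- `L` is the (unique) normalized fundamental solution
    (L : Matrix (Fin n) (Fin n) (MvPowerSeries (Fin r ⊕ Fin (s + 1)) LH))
    (hLt : ∀ i, hbarC (Fin r ⊕ Fin (s + 1)) • mpd (Sum.inr i) L + Ω i * L = 0)
    (hLq : ∀ a, hbarC (Fin r ⊕ Fin (s + 1)) • meu (Sum.inl a) L + A a * L
                  - L * mC (m0 (A a)) = 0)
    (hL0 : m0 L = 1) :
    -- `L - Id ∈ ħ⁻¹ · M_n(ℂ[[ħ⁻¹]][[Q,t]])`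
    ∀ (i j : Fin n) (d : (Fin r ⊕ Fin (s + 1)) →₀ ℕ),
      InPSinvPos (MvPowerSeries.coeff (R := LH) d ((L - 1) i j)) := fun i j d z hz =>
  congrFun (congrFun (coeffMat_fundamentalSolution_sub_one_eq_zero hA hΩ hLt hLq hL0 d z hz) i) j

/-- the fundamental solution of a canonical frame has the form
`Id + O(ħ⁻¹)`, with no positive `ħ`-powers. -/
theorem statement1 (n r s : ℕ) (hn : 1 ≤ n) (hr : 1 ≤ r)
    (A : Fin r → Matrix (Fin n) (Fin n) (MvPowerSeries (Fin r ⊕ Fin (s + 1)) LH))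
    (Ω : Fin (s + 1) → Matrix (Fin n) (Fin n) (MvPowerSeries (Fin r ⊕ Fin (s + 1)) LH))
    -- the connection matrices have entries in `ℂ[[Q,t]]`, i.e. are independent of `ħ`
    (hA : ∀ a, MatNoH (A a)) (hΩ : ∀ i, MatNoH (Ω i))
    -- the operators `∇^a = ħ Q^a ∂/∂Q^a + A_a`, `∇_i = ħ ∂/∂t^i + Ω_i` pairwise commute
    (hQQ : ∀ a b v, nablaE (Sum.inl a) (A a) (nablaE (Sum.inl b) (A b) v)
         = nablaE (Sum.inl b) (A b) (nablaE (Sum.inl a) (A a) v))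
    (hQT : ∀ a i v, nablaE (Sum.inl a) (A a) (nablaP (Sum.inr i) (Ω i) v)
         = nablaP (Sum.inr i) (Ω i) (nablaE (Sum.inl a) (A a) v))
    (hTT : ∀ i j v, nablaP (Sum.inr i) (Ω i) (nablaP (Sum.inr j) (Ω j) v)
         = nablaP (Sum.inr j) (Ω j) (nablaP (Sum.inr i) (Ω i) v))
    -- `L` is the (unique) normalized fundamental solution
    (L : Matrix (Fin n) (Fin n) (MvPowerSeries (Fin r ⊕ Fin (s + 1)) LH))
    (hLt : ∀ i, hbarC (Fin r ⊕ Fin (s + 1)) • mpd (Sum.inr i) L + Ω i * L = 0)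
    (hLq : ∀ a, hbarC (Fin r ⊕ Fin (s + 1)) • meu (Sum.inl a) L + A a * L
                  - L * mC (m0 (A a)) = 0)
    (hL0 : m0 L = 1) :
    -- `L - Id ∈ ħ⁻¹ · M_n(ℂ[[ħ⁻¹]][[Q,t]])`
    ∀ (i j : Fin n) (d : (Fin r ⊕ Fin (s + 1)) →₀ ℕ),
      InPSinvPos (MvPowerSeries.coeff (R := LH) d ((L - 1) i j)) :=
  statement1_general n r s A Ω hA hΩ L hLt hLq hL0
end
end

section
/- Fix integers n ≥ 1 and m ≥ 1. Let L be an n×n matrix with entries in ℂ((ħ^{-1}))[[x_1,…,x_m]] with L|_{x=0} = Id_n. Then L is invertible over ℂ((ħ^{-1}))[[x]], and if L = L_+ L_− is its Birkhoff factorization (L_+ over ℂ[ħ][[x]] with L_+|_{x=0} = Id, L_− ∈ Id + ħ^{-1}M_n(ℂ[[ħ^{-1}]][[x]])), then for every v ∈ ℂ^n, the series Σ_{k≥0} (Id − π_+ ∘ L^{-1})^k v converges in the (x_1,…,x_m)-adic topology of (ℂ[ħ][[x]])^n and its sum equals L_+ v; here π_+ : (ℂ((ħ^{-1}))[[x]])^n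 → (ℂ[ħ][[x]])^n is the projection that discards all strictly negative powers of ħ, and L^{-1} acts by matrix multiplication. -/
noncomputable section

/-- The projection `π₊ : ℂ((ħ⁻¹)) → ℂ[ħ]` discarding all strictly negative powers of
`ħ` (i.e. keeping the coefficients in degrees `z ≤ 0` of the variable `X = ħ⁻¹`). -/
def truncPlus (f : LH) : LH where
  coeff z := if z ≤ 0 then f.coeff z else 0
  isPWO_support' := f.isPWO_support'.mono (by
    intro z hz
    simp only [Function.mem_support] at hz ⊢
    intro h
    apply hz
    by_cases hle : z ≤ 0 <;> simp [hle, h])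

/-- `π₊` applied coefficientwise on power series: the projection
`ℂ((ħ⁻¹))[[x]] → ℂ[ħ][[x]]`. -/
def piPlus {σ : Type} (f : MvPowerSeries σ LH) : MvPowerSeries σ LH :=
  fun d => truncPlus (MvPowerSeries.coeff (R := LH) d f)

/-!
Let `F w = w - π₊ (L⁻¹ w)`. Since `L⁻¹ L₊ = L₋⁻¹ ∈ Id + ħ⁻¹ M_n(ℂ[[ħ⁻¹]][[x]])` and `v` does
not depend on `ħ`, we have `π₊ (L⁻¹ L₊ v) = v`, that is `v = L₊ v - F (L₊ v)`. As `F` is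
additive, the partial sums telescope: `∑_{k<N} F^k v = L₊ v - F^N (L₊ v)`. On `ℂ[ħ][[x]]^n` the
map `F` agrees with `π₊ ∘ (Id - L⁻¹)`, and `L⁻¹ ≡ Id` modulo `(x)`, so `F` raises the `x`-adic
order by one; hence `F^N (L₊ v)` has order at least `N`.
-/

open MvPowerSeries
open scoped Matrix

instance MvPowerSeries.isLocalHom_constantCoeff {σ R : Type*} [CommRing R] :
    IsLocalHom (constantCoeff : MvPowerSeries σ R →+* R) :=
  ⟨fun _ => isUnit_iff_constantCoeff.mpr⟩

instance PowerSeries.isLocalHom_constantCoeff {R : Type*} [CommRing R] :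
    IsLocalHom (PowerSeries.constantCoeff : PowerSeries R →+* R) :=
  ⟨fun _ => PowerSeries.isUnit_iff_constantCoeff.mpr⟩

namespace Matrix

variable {ι R S : Type*} [Fintype ι] [DecidableEq ι] [CommRing R] [CommRing S]
  {f : R →+* S} [IsLocalHom f] {M : Matrix ι ι R}

theorem isUnit_det_of_mapMatrix_eq_one (h : f.mapMatrix M = 1) : IsUnit M.det := by
  apply isUnit_of_map_unit f
  rw [RingHom.map_det, h, det_one]
  exact isUnit_one

theorem mapMatrix_nonsing_inv_eq_one (h : f.mapMatrix M = 1) : f.mapMatrix M⁻¹ = 1 := by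
  have := congrArg f.mapMatrix (M.mul_nonsing_inv (isUnit_det_of_mapMatrix_eq_one h))
  rwa [map_mul, map_one, h, one_mul] at this

end Matrix

theorem MvPowerSeries.one_le_order_one_sub {ι σ R : Type*} [Fintype ι] [DecidableEq ι] [CommRing R]
    {A : Matrix ι ι (MvPowerSeries σ R)} (h : constantCoeff.mapMatrix A = 1) (i j : ι) :
    1 ≤ ((1 - A) i j).order := by
  rw [one_le_order_iff_constCoeff_eq_zero]
  have : constantCoeff.mapMatrix (1 - A) = 0 := by rw [map_sub, map_one, h, sub_self]
  exact congrFun (congrFun this i) j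

theorem MvPowerSeries.le_order_mulVec {ι σ R : Type*} [Fintype ι] [CommRing R]
    {A : Matrix ι ι (MvPowerSeries σ R)} {w : ι → MvPowerSeries σ R} {a b : ℕ∞}
    (hA : ∀ i j, a ≤ (A i j).order) (hw : ∀ j, b ≤ (w j).order) (i : ι) :
    a + b ≤ ((A *ᵥ w) i).order := by
  refine le_order fun d hd => ?_
  simp only [Matrix.mulVec, dotProduct, map_sum]
  exact Finset.sum_eq_zero fun j _ =>
    coeff_of_lt_order (hd.trans_le ((add_le_add (hA i j) (hw j)).trans le_order_mul))

theorem sum_range_iterate_sub_self {M : Type*} [AddCommGroup M] (F : M →+ M) (x : M) (N : ℕ) :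
    ∑ k ∈ Finset.range N, F^[k] (x - F x) = x - F^[N] x := by
  simp_rw [iterate_map_sub, ← Function.iterate_succ_apply]
  exact Finset.sum_range_sub' _ _

section Truncation

@[simp]
theorem coeff_truncPlus (f : LH) (z : ℤ) :
    (truncPlus f).coeff z = if z ≤ 0 then f.coeff z else 0 := rfl

theorem truncPlus_zero : truncPlus 0 = 0 := by
  ext z; simp

theorem truncPlus_add (f g : LH) : truncPlus (f + g) = truncPlus f + truncPlus g := by
  ext z; simp only [coeff_truncPlus, HahnSeries.coeff_add]; split_ifs <;> simp

theorem truncPlus_truncPlus (f : LH) : truncPlus (truncPlus f) = truncPlus f := by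
  ext z; simp only [coeff_truncPlus]; split_ifs <;> rfl

theorem truncPlus_mul_C (f : LH) (c : ℂ) :
    truncPlus (f * HahnSeries.C c) = truncPlus f * HahnSeries.C c := by
  ext z
  simp only [coeff_truncPlus, mul_comm _ (HahnSeries.C c), HahnSeries.C_mul_eq_smul,
    HahnSeries.coeff_smul]
  split_ifs <;> simp

theorem truncPlus_eq_self {f : LH} (hf : InPolyH f) : truncPlus f = f := by
  ext z
  rw [coeff_truncPlus, ite_eq_left_iff, not_le]
  exact fun hz => (hf z hz).symm

theorem truncPlus_eq_zero {f : LH} (hf : InPSinvPos f) : truncPlus f = 0 := by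
  ext z
  rw [coeff_truncPlus, HahnSeries.coeff_zero, ite_eq_right_iff]
  exact hf z

variable {σ : Type}

theorem coeff_piPlus (f : MvPowerSeries σ LH) (d : σ →₀ ℕ) :
    coeff d (piPlus f) = truncPlus (coeff d f) := rfl

theorem piPlus_add (f g : MvPowerSeries σ LH) : piPlus (f + g) = piPlus f + piPlus g := by
  ext d; simp only [coeff_piPlus, map_add, truncPlus_add]

theorem piPlus_zero : piPlus (0 : MvPowerSeries σ LH) = 0 := by
  ext d; rw [coeff_piPlus, map_zero, truncPlus_zero]

def piPlusHom (σ : Type) : MvPowerSeries σ LH →+ MvPowerSeries σ LH :=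
  AddMonoidHom.mk' piPlus piPlus_add

theorem piPlus_sub (f g : MvPowerSeries σ LH) : piPlus (f - g) = piPlus f - piPlus g :=
  (piPlusHom σ).map_sub f g

theorem piPlus_sum {α : Type*} (s : Finset α) (f : α → MvPowerSeries σ LH) :
    piPlus (∑ a ∈ s, f a) = ∑ a ∈ s, piPlus (f a) :=
  map_sum (piPlusHom σ) f s

theorem piPlus_piPlus (f : MvPowerSeries σ LH) : piPlus (piPlus f) = piPlus f := by
  ext d; simp only [coeff_piPlus, truncPlus_truncPlus]

theorem piPlus_eq_self {f : MvPowerSeries σ LH} (hf : ∀ d, InPolyH (coeff d f)) :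
    piPlus f = f := by
  ext d; rw [coeff_piPlus, truncPlus_eq_self (hf d)]

theorem piPlus_eq_zero {f : MvPowerSeries σ LH} (hf : ∀ d, InPSinvPos (coeff d f)) :
    piPlus f = 0 := by
  ext d; rw [coeff_piPlus, truncPlus_eq_zero (hf d), map_zero]

theorem piPlus_one : piPlus (1 : MvPowerSeries σ LH) = 1 := by
  classical
  refine piPlus_eq_self fun d z hz => ?_
  rw [coeff_one]
  split_ifs <;> simp [HahnSeries.coeff_one, hz.ne']

theorem piPlus_mul_C (f : MvPowerSeries σ LH) (c : ℂ) :
    piPlus (f * C (HahnSeries.C c)) = piPlus f * C (HahnSeries.C c) := by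
  ext d; simp only [coeff_piPlus, coeff_mul_C, truncPlus_mul_C]

theorem le_order_piPlus {f : MvPowerSeries σ LH} {k : ℕ∞} (h : k ≤ f.order) :
    k ≤ (piPlus f).order :=
  le_order fun d hd => by rw [coeff_piPlus, coeff_of_lt_order (hd.trans_le h), truncPlus_zero]

variable {ι : Type*} [Fintype ι]

theorem piPlus_mulVec_C (A : Matrix ι ι (MvPowerSeries σ LH)) (c : ι → ℂ) (i : ι) :
    piPlus ((A *ᵥ fun j => C (HahnSeries.C (c j))) i) =
      (A.map piPlus *ᵥ fun j => C (HahnSeries.C (c j))) i := by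
  simp only [Matrix.mulVec, dotProduct, piPlus_sum, piPlus_mul_C, Matrix.map_apply]

end Truncation

section NeumannStep

variable {σ : Type} {ι : Type*} [Fintype ι]

def neumannStep (A : Matrix ι ι (MvPowerSeries σ LH)) :
    (ι → MvPowerSeries σ LH) →+ (ι → MvPowerSeries σ LH) :=
  AddMonoidHom.mk' (fun w => w - fun i => piPlus ((A *ᵥ w) i)) fun w w' => by
    funext i
    simp only [Matrix.mulVec_add, Pi.add_apply, Pi.sub_apply, piPlus_add]
    abel

variable {A : Matrix ι ι (MvPowerSeries σ LH)} {w : ι → MvPowerSeries σ LH}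

theorem neumannStep_apply (i : ι) : neumannStep A w i = w i - piPlus ((A *ᵥ w) i) := rfl

theorem piPlus_neumannStep (hw : ∀ i, piPlus (w i) = w i) (i : ι) :
    piPlus (neumannStep A w i) = neumannStep A w i := by
  rw [neumannStep_apply, piPlus_sub, hw, piPlus_piPlus]

variable [DecidableEq ι]

theorem neumannStep_eq_piPlus_one_sub_mulVec (hw : ∀ i, piPlus (w i) = w i) (i : ι) :
    neumannStep A w i = piPlus (((1 - A) *ᵥ w) i) := by
  rw [neumannStep_apply, Matrix.sub_mulVec, Matrix.one_mulVec, Pi.sub_apply, piPlus_sub, hw]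

theorem le_order_iterate_neumannStep (hA : ∀ i j, 1 ≤ ((1 - A) i j).order)
    (hw : ∀ i, piPlus (w i) = w i) (N : ℕ) (i : ι) :
    (N : ℕ∞) ≤ ((neumannStep A)^[N] w i).order := by
  have hfix : ∀ k i, piPlus ((neumannStep A)^[k] w i) = (neumannStep A)^[k] w i := by
    intro k
    induction k with
    | zero => exact hw
    | succ k ih => simpa only [Function.iterate_succ_apply'] using piPlus_neumannStep ih
  induction N generalizing i with
  | zero => simp
  | succ N ih =>
    rw [Function.iterate_succ_apply', neumannStep_eq_piPlus_one_sub_mulVec (hfix N), Nat.cast_succ,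
      add_comm]
    exact le_order_piPlus (le_order_mulVec hA ih i)

end NeumannStep

section NegativeFactor

variable {σ : Type}

open HahnSeries (ofPowerSeries)

theorem exists_ofPowerSeries_eq {f : LH} (hf : InPSinv f) :
    ∃ p : PowerSeries ℂ, ofPowerSeries ℤ ℂ p = f := by
  refine ⟨PowerSeries.mk fun k => f.coeff k, ?_⟩
  ext z
  rw [PowerSeries.coeff_coe]
  split_ifs with hz
  · exact (hf z hz).symm
  · rw [PowerSeries.coeff_mk, Int.natAbs_of_nonneg (not_lt.mp hz)]

theorem inPSinvPos_ofPowerSeries_iff {p : PowerSeries ℂ} :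
    InPSinvPos (ofPowerSeries ℤ ℂ p) ↔ PowerSeries.constantCoeff p = 0 := by
  refine ⟨fun h => ?_, fun h z hz => ?_⟩
  · simpa [PowerSeries.coeff_coe] using h 0 le_rfl
  · rw [PowerSeries.coeff_coe]
    split_ifs with hz'
    · rfl
    · rw [le_antisymm hz (not_lt.mp hz'), Int.natAbs_zero,
        PowerSeries.coeff_zero_eq_constantCoeff_apply, h]

theorem exists_map_ofPowerSeries_eq {f : MvPowerSeries σ LH} (hf : ∀ d, InPSinv (coeff d f)) :
    ∃ g : MvPowerSeries σ (PowerSeries ℂ), map (ofPowerSeries ℤ ℂ) g = f := by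
  choose g hg using fun d => exists_ofPowerSeries_eq (hf d)
  exact ⟨g, ext fun d => (coeff_map _ _ _).trans (hg d)⟩

theorem forall_inPSinvPos_coeff_map_iff {g : MvPowerSeries σ (PowerSeries ℂ)} :
    (∀ d, InPSinvPos (coeff d (map (ofPowerSeries ℤ ℂ) g))) ↔
      map PowerSeries.constantCoeff g = 0 := by
  simp only [coeff_map, inPSinvPos_ofPowerSeries_iff, MvPowerSeries.ext_iff, map_zero]

variable {ι : Type*} [Fintype ι] [DecidableEq ι]

theorem map_piPlus_inv_eq_one {Lm : Matrix ι ι (MvPowerSeries σ LH)}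
    (hLm : ∀ i j d, InPSinv (coeff d (Lm i j)))
    (hLm1 : ∀ i j d, InPSinvPos (coeff d ((Lm - 1) i j))) :
    Lm⁻¹.map piPlus = 1 := by
  -- `Lm` is the image of a matrix `M` over `ℂ[[ħ⁻¹]][[x]]` with `M ≡ 1` modulo `ħ⁻¹`,
  -- and reduction modulo `ħ⁻¹` commutes with inversion.
  let φ : MvPowerSeries σ (PowerSeries ℂ) →+* MvPowerSeries σ LH := map (ofPowerSeries ℤ ℂ)
  let ε : MvPowerSeries σ (PowerSeries ℂ) →+* MvPowerSeries σ ℂ := map PowerSeries.constantCoeff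
  obtain ⟨M, hLmM⟩ : ∃ M, Lm = φ.mapMatrix M := by
    choose M hM using fun i j => exists_map_ofPowerSeries_eq (hLm i j)
    exact ⟨Matrix.of M, Matrix.ext fun i j => (hM i j).symm⟩
  have hM1 : ε.mapMatrix M = 1 := by
    rw [← sub_eq_zero, ← map_one ε.mapMatrix, ← map_sub]
    refine Matrix.ext fun i j => ?_
    rw [RingHom.mapMatrix_apply, Matrix.map_apply, Matrix.zero_apply]
    have h := hLm1 i j
    rw [hLmM, ← map_one φ.mapMatrix, ← map_sub] at h
    exact forall_inPSinvPos_coeff_map_iff.mp h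
  have hinv : Lm⁻¹ = φ.mapMatrix M⁻¹ := Matrix.inv_eq_right_inv <| by
    rw [hLmM, ← map_mul, M.mul_nonsing_inv (Matrix.isUnit_det_of_mapMatrix_eq_one hM1), map_one]
  have hinv1 : ε.mapMatrix (M⁻¹ - 1) = 0 := by
    rw [map_sub, Matrix.mapMatrix_nonsing_inv_eq_one hM1, map_one, sub_self]
  have hker : (Lm⁻¹ - 1).map piPlus = 0 := Matrix.ext fun i j => by
    rw [Matrix.map_apply, hinv, ← map_one φ.mapMatrix, ← map_sub]
    exact piPlus_eq_zero (forall_inPSinvPos_coeff_map_iff.mpr (congrFun (congrFun hinv1 i) j))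
  rw [← sub_add_cancel Lm⁻¹ 1, Matrix.map_add _ piPlus_add, hker, zero_add,
    Matrix.map_one _ piPlus_zero piPlus_one]

end NegativeFactor

theorem statement3_general (n m : ℕ)
    (L Lp Lm : Matrix (Fin n) (Fin n) (MvPowerSeries (Fin m) LH))
    (hL0 : m0 L = 1)
    -- `L = L₊ L₋` is the Birkhoff factorization
    (hLp : ∀ (i j : Fin n) (d : Fin m →₀ ℕ), InPolyH (MvPowerSeries.coeff (R := LH) d (Lp i j)))
    (hLp0 : m0 Lp = 1)
    (hLm : ∀ (i j : Fin n) (d : Fin m →₀ ℕ), InPSinv (MvPowerSeries.coeff (R := LH) d (Lm i j)))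
    (hLm1 : ∀ (i j : Fin n) (d : Fin m →₀ ℕ),
      InPSinvPos (MvPowerSeries.coeff (R := LH) d ((Lm - 1) i j)))
    (hfac : L = Lp * Lm) :
    -- `L` is invertible over `ℂ((ħ⁻¹))[[x]]`
    IsUnit L ∧
    -- the partial sums of `Σ_k (Id − π₊ ∘ L⁻¹)^k v` converge `(x)`-adically to `L₊ v`
    ∀ v : Fin n → ℂ, ∀ (d : Fin m →₀ ℕ) (i : Fin n), ∃ N₀ : ℕ, ∀ N ≥ N₀,
      MvPowerSeries.coeff (R := LH) d
        ((∑ k ∈ Finset.range N,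
          (fun w : Fin n → MvPowerSeries (Fin m) LH =>
              w - fun i' => piPlus ((L⁻¹.mulVec w) i'))^[k]
            (fun j => MvPowerSeries.C (σ := Fin m) (R := LH) (HahnSeries.C (v j)))) i)
      = MvPowerSeries.coeff (R := LH) d
          ((Lp.mulVec (fun j => MvPowerSeries.C (σ := Fin m) (R := LH) (HahnSeries.C (v j)))) i) := by
  replace hL0 : constantCoeff.mapMatrix L = 1 := hL0
  replace hLp0 : constantCoeff.mapMatrix Lp = 1 := hLp0
  have hLdet := Matrix.isUnit_det_of_mapMatrix_eq_one hL0
  refine ⟨(Matrix.isUnit_iff_isUnit_det L).mpr hLdet, fun v d i => ⟨d.degree + 1, fun N hN => ?_⟩⟩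
  set c : Fin n → MvPowerSeries (Fin m) LH := fun j => C (HahnSeries.C (v j))
  have hLinvLp : L⁻¹ * Lp = Lm⁻¹ := by
    rw [hfac, Matrix.mul_inv_rev, Matrix.mul_assoc,
      Lp.nonsing_inv_mul (Matrix.isUnit_det_of_mapMatrix_eq_one hLp0), Matrix.mul_one]
  have hLpc : ∀ i, piPlus ((Lp *ᵥ c) i) = (Lp *ᵥ c) i := fun i => by
    rw [piPlus_mulVec_C,
      show Lp.map piPlus = Lp from Matrix.ext fun i j => piPlus_eq_self (hLp i j)]
  have hstep : Lp *ᵥ c - neumannStep L⁻¹ (Lp *ᵥ c) = c := funext fun i => by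
    rw [Pi.sub_apply, neumannStep_apply, sub_sub_cancel, Matrix.mulVec_mulVec, hLinvLp,
      piPlus_mulVec_C, map_piPlus_inv_eq_one hLm hLm1, Matrix.one_mulVec]
  have hsum : ∑ k ∈ Finset.range N, (neumannStep L⁻¹)^[k] c =
      Lp *ᵥ c - (neumannStep L⁻¹)^[N] (Lp *ᵥ c) := by
    rw [← sum_range_iterate_sub_self, hstep]
  have horder := le_order_iterate_neumannStep
    (one_le_order_one_sub (Matrix.mapMatrix_nonsing_inv_eq_one hL0)) hLpc N i
  change coeff d ((∑ k ∈ Finset.range N, (neumannStep L⁻¹)^[k] c) i) = coeff d ((Lp *ᵥ c) i)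
  rw [hsum, Pi.sub_apply, map_sub,
    coeff_of_lt_order (lt_of_lt_of_le (by exact_mod_cast hN) horder), sub_zero]

/-- invertibility of `L` and the Neumann-series formula
`L₊ v = Σ_k (Id − π₊ ∘ L⁻¹)^k v` for the positive Birkhoff factor,
convergence being in the `(x)`-adic topology. -/
theorem statement3 (n m : ℕ) (hn : 1 ≤ n) (hm : 1 ≤ m)
    (L Lp Lm : Matrix (Fin n) (Fin n) (MvPowerSeries (Fin m) LH))
    (hL0 : m0 L = 1)
    -- `L = L₊ L₋` is the Birkhoff factorization
    (hLp : ∀ (i j : Fin n) (d : Fin m →₀ ℕ), InPolyH (MvPowerSeries.coeff (R := LH) d (Lp i j)))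
    (hLp0 : m0 Lp = 1)
    (hLm : ∀ (i j : Fin n) (d : Fin m →₀ ℕ), InPSinv (MvPowerSeries.coeff (R := LH) d (Lm i j)))
    (hLm1 : ∀ (i j : Fin n) (d : Fin m →₀ ℕ),
      InPSinvPos (MvPowerSeries.coeff (R := LH) d ((Lm - 1) i j)))
    (hfac : L = Lp * Lm) :
    -- `L` is invertible over `ℂ((ħ⁻¹))[[x]]`
    IsUnit L ∧
    -- the partial sums of `Σ_k (Id − π₊ ∘ L⁻¹)^k v` converge `(x)`-adically to `L₊ v`
    ∀ v : Fin n → ℂ, ∀ (d : Fin m →₀ ℕ) (i : Fin n), ∃ N₀ : ℕ, ∀ N ≥ N₀,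
      MvPowerSeries.coeff (R := LH) d
        ((∑ k ∈ Finset.range N,
          (fun w : Fin n → MvPowerSeries (Fin m) LH =>
              w - fun i' => piPlus ((L⁻¹.mulVec w) i'))^[k]
            (fun j => MvPowerSeries.C (σ := Fin m) (R := LH) (HahnSeries.C (v j)))) i)
      = MvPowerSeries.coeff (R := LH) d
          ((Lp.mulVec (fun j => MvPowerSeries.C (σ := Fin m) (R := LH) (HahnSeries.C (v j)))) i) :=
  statement3_general n m L Lp Lm hL0 hLp hLp0 hLm hLm1 hfac
end
end

section
/- Fix 1 ≤ r ≤ s and n = s + 1. Let 𝔸_a(Q,t) (1 ≤ a ≤ r) and Ω_i(Q,t) (0 ≤ i ≤ s) be n×n matrices with entries in ℂ[[Q^1,…,Q^r,t^0,…,t^s]] that pairwise commute and satisfy Q^b∂𝔸_a/∂Q^b = Q^a∂𝔸_b/∂Q^a, ∂Ω_i/∂t^j = ∂Ω_j/∂t^i, ∂𝔸_a/∂t^i = Q^a∂Ω_i/∂Q^a. Set p_a := 𝔸_a(0,0). Suppose (e_0, e_1, …, e_s) is a basis of ℂ^n such that Ω_i(Q,t)e_0 = e_i for all i, 𝔸_a(Q,t)e_0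 = p_ae_0 for all a (identically in Q, t), and e_a = p_ae_0 for 1 ≤ a ≤ r. Then: (a) Ω_0(Q,t) = Id_n identically; (b) 𝔸_a(Q,t) = Ω_a(Q,t) for 1 ≤ a ≤ r; (c) ∂Ω_i/∂t^0 = 0 and (∂/∂t^a − Q^a∂/∂Q^a)Ω_i = 0 for all 0 ≤ i ≤ s and 1 ≤ a ≤ r; and (d) the fundamental solution L (satisfying ħ∂L/∂t^i + Ω_iL = 0, ħQ^a∂L/∂Q^a + 𝔸_aL − Lp_a = 0, L|_{Q=t=0} = Id) satisfies (∂/∂t^a − Q^a∂/∂Q^a)L + (1/ħ)·L p_a = 0 for 1 ≤ a ≤ r and ħ ∂L/∂t^0 + L = 0. -/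
noncomputable section

/-- The inclusion `ℂ[[Q,t]] → ℂ((ħ⁻¹))[[Q,t]]`, coefficientwise. -/
def psL {σ : Type} (f : MvPowerSeries σ ℂ) : MvPowerSeries σ LH :=
  fun d => HahnSeries.C (MvPowerSeries.coeff (R := ℂ) d f)

/-- The inclusion of matrices over `ℂ[[Q,t]]` into matrices over `ℂ((ħ⁻¹))[[Q,t]]`. -/
def mL {σ : Type} {n : ℕ} (M : Matrix (Fin n) (Fin n) (MvPowerSeries σ ℂ)) :
    Matrix (Fin n) (Fin n) (MvPowerSeries σ LH) := M.map psL

/-- A complex matrix viewed as a constant matrix over `ℂ((ħ⁻¹))[[Q,t]]`. -/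
def mCL {σ : Type} {n : ℕ} (M : Matrix (Fin n) (Fin n) ℂ) :
    Matrix (Fin n) (Fin n) (MvPowerSeries σ LH) :=
  M.map (fun c => MvPowerSeries.C (σ := σ) (R := LH) (HahnSeries.C c))

/-! The vector `e₀` is cyclic for the commuting family `Ω`, since `Ω_i e₀ = e_i` runs through a
basis; hence a matrix commuting with every `Ω_i` is determined by its value on `e₀`. Comparing
values on `e₀` gives `Ω₀ = 1` and `𝔸_a = Ω_{a+1}`; (c) then follows from the integrability
conditions, and (d) by subtracting the `t^{a+1}`- and `Q^a`-equations for `L` and dividing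
by `ħ`. -/

section Derivatives

variable {σ R : Type} [CommRing R]

lemma pd_C (x : σ) (c : R) : pd x (MvPowerSeries.C c) = 0 := by
  classical
  funext d
  have hd : d + Finsupp.single x 1 ≠ 0 := fun h => by
    simpa using DFunLike.congr_fun h x
  simp only [pd, MvPowerSeries.coeff_C, if_neg hd, mul_zero]
  rfl

lemma mpd_one {n : ℕ} (x : σ) :
    mpd x (1 : Matrix (Fin n) (Fin n) (MvPowerSeries σ R)) = 0 := by
  ext i j : 1
  rw [mpd, Matrix.map_apply, Matrix.one_apply, Matrix.zero_apply]
  split_ifs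
  · simpa only [map_one] using pd_C x (1 : R)
  · simpa only [map_zero] using pd_C x (0 : R)

end Derivatives

lemma mL_one {σ : Type} {n : ℕ} : mL (1 : Matrix (Fin n) (Fin n) (MvPowerSeries σ ℂ)) = 1 :=
  Matrix.map_one (MvPowerSeries.map (σ := σ) (HahnSeries.C (Γ := ℤ) (R := ℂ)))
    (map_zero _) (map_one _)

section CyclicVector

open Matrix

variable {K S m : Type*} [Field K] [CommRing S] [Fintype m] [DecidableEq m] (f : K →+* S)
  {e : m → m → K}

lemma Matrix.eq_zero_of_mulVec_map_eq_zero (he : LinearIndependent K e) {X : Matrix m m S}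
    (hX : ∀ j, X *ᵥ (fun k => f (e j k)) = 0) : X = 0 := by
  have hE : IsUnit ((of e)ᵀ.map f) :=
    (isUnit_transpose _ |>.2 (linearIndependent_rows_iff_isUnit.1 he)).map f.mapMatrix
  refine hE.mul_left_eq_zero.1 ?_
  ext i j
  simpa [mul_apply, mulVec, dotProduct] using congrFun (hX j) i

lemma Matrix.eq_zero_of_commute_of_mulVec_eq_zero (he : LinearIndependent K e)
    {Ω : m → Matrix m m S} {i₀ : m} (hΩ : ∀ j, Ω j *ᵥ (fun k => f (e i₀ k)) = fun k => f (e j k))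
    {X : Matrix m m S} (hcomm : ∀ j, X * Ω j = Ω j * X) (hX : X *ᵥ (fun k => f (e i₀ k)) = 0) :
    X = 0 :=
  eq_zero_of_mulVec_map_eq_zero f he fun j => by
    rw [← hΩ j, mulVec_mulVec, hcomm, ← mulVec_mulVec, hX, mulVec_zero]

end CyclicVector

lemma sub_add_smul_eq_zero {R M : Type*} [CommRing R] [AddCommGroup M] [Module R M]
    {h c : R} (hc : c * h = 1) {x y a b : M} (hx : h • x + a = 0) (hy : h • y + a - b = 0) :
    x - y + c • b = 0 := by
  linear_combination (norm := module) c • hx - c • hy - (hc • (x - y))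

lemma C_inv_hbar_mul_hbarC (σ : Type) :
    MvPowerSeries.C (σ := σ) (R := LH) hbar⁻¹ * hbarC σ = 1 := by
  rw [hbarC, ← map_mul, inv_mul_cancel₀ (HahnSeries.single_ne_zero one_ne_zero), map_one]

/-- abstract string and divisor equations for a big abstract quantum
D-module in flat coordinates normalized by `℘₀e₀ = e₀`, `℘_a e₀ = p_a e₀`. -/
theorem statement7 (r s : ℕ) (hrs : r ≤ s)
    (𝔸 : Fin r → Matrix (Fin (s + 1)) (Fin (s + 1)) (MvPowerSeries (Fin r ⊕ Fin (s + 1)) ℂ))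
    (Ω : Fin (s + 1) → Matrix (Fin (s + 1)) (Fin (s + 1)) (MvPowerSeries (Fin r ⊕ Fin (s + 1)) ℂ))
    -- the connection matrices pairwise commute and are integrable
    (hAO : ∀ a i, 𝔸 a * Ω i = Ω i * 𝔸 a)
    (hOO : ∀ i j, Ω i * Ω j = Ω j * Ω i)
    (hiTT : ∀ i j, mpd (Sum.inr j) (Ω i) = mpd (Sum.inr i) (Ω j))
    (hiQT : ∀ a i, mpd (Sum.inr i) (𝔸 a) = meu (Sum.inl a) (Ω i))
    (p : Fin r → Matrix (Fin (s + 1)) (Fin (s + 1)) ℂ)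
    -- a basis `(e_0, …, e_s)` of `ℂ^n`
    (e : Fin (s + 1) → Fin (s + 1) → ℂ)
    (heLI : LinearIndependent ℂ e)
    -- `Ω_i(Q,t) e_0 = e_i` identically
    (hOe : ∀ i, (Ω i).mulVec (fun k => MvPowerSeries.C (σ := Fin r ⊕ Fin (s + 1)) (R := ℂ) (e 0 k))
        = fun k => MvPowerSeries.C (σ := Fin r ⊕ Fin (s + 1)) (R := ℂ) (e i k))
    -- `𝔸_a(Q,t) e_0 = p_a e_0` identically
    (hAe : ∀ a, (𝔸 a).mulVec (fun k => MvPowerSeries.C (σ := Fin r ⊕ Fin (s + 1)) (R := ℂ) (e 0 k))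
        = fun k => MvPowerSeries.C (σ := Fin r ⊕ Fin (s + 1)) (R := ℂ) ((p a).mulVec (e 0) k))
    -- `e_a = p_a e_0` for `1 ≤ a ≤ r`
    (hea : ∀ a : Fin r, e ⟨a.1 + 1, by omega⟩ = (p a).mulVec (e 0))
    -- `L` is the normalized fundamental solution
    (L : Matrix (Fin (s + 1)) (Fin (s + 1)) (MvPowerSeries (Fin r ⊕ Fin (s + 1)) LH))
    (hLt : ∀ i, hbarC (Fin r ⊕ Fin (s + 1)) • mpd (Sum.inr i) L + mL (Ω i) * L = 0)
    (hLq : ∀ a, hbarC (Fin r ⊕ Fin (s + 1)) • meu (Sum.inl a) L + mL (𝔸 a) * L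
                  - L * mCL (p a) = 0) :
    -- (a) `Ω_0 = Id`
    Ω 0 = 1 ∧
    -- (b) `𝔸_a = Ω_a` for `1 ≤ a ≤ r`
    (∀ a : Fin r, 𝔸 a = Ω ⟨a.1 + 1, by omega⟩) ∧
    -- (c) `∂Ω_i/∂t^0 = 0` and `(∂/∂t^a − Q^a ∂/∂Q^a) Ω_i = 0`
    (∀ i, mpd (Sum.inr 0) (Ω i) = 0) ∧
    (∀ (a : Fin r) (i : Fin (s + 1)),
      mpd (Sum.inr ⟨a.1 + 1, by omega⟩) (Ω i) - meu (Sum.inl a) (Ω i) = 0) ∧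
    -- (d) `(∂/∂t^a − Q^a ∂/∂Q^a) L + ħ⁻¹ L p_a = 0` and `ħ ∂L/∂t^0 + L = 0`
    (∀ a : Fin r,
      mpd (Sum.inr ⟨a.1 + 1, by omega⟩) L - meu (Sum.inl a) L
        + MvPowerSeries.C (σ := Fin r ⊕ Fin (s + 1)) (R := LH) hbar⁻¹ • (L * mCL (p a)) = 0) ∧
    hbarC (Fin r ⊕ Fin (s + 1)) • mpd (Sum.inr 0) L + L = 0 := by
  have hcyclic := fun X => Matrix.eq_zero_of_commute_of_mulVec_eq_zero (X := X) _ heLI hOe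
  have hΩ0 : Ω 0 = 1 := sub_eq_zero.1 <| hcyclic _
    (fun j => by rw [sub_mul, mul_sub, hOO, one_mul, mul_one])
    (by rw [Matrix.sub_mulVec, hOe, Matrix.one_mulVec, sub_self])
  have h𝔸 : ∀ a : Fin r, 𝔸 a = Ω ⟨a.1 + 1, by omega⟩ := fun a => sub_eq_zero.1 <| hcyclic _
    (fun j => by rw [sub_mul, mul_sub, hAO, hOO])
    (by rw [Matrix.sub_mulVec, hAe, hOe, hea, sub_self])
  refine ⟨hΩ0, h𝔸, fun i => by rw [hiTT, hΩ0, mpd_one],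
    fun a i => by rw [hiTT i, ← h𝔸, hiQT, sub_self], fun a => ?_, ?_⟩
  · have ht := hLt ⟨a.1 + 1, by omega⟩
    rw [← h𝔸] at ht
    exact sub_add_smul_eq_zero (R := MvPowerSeries (Fin r ⊕ Fin (s + 1)) LH)
      (M := Matrix (Fin (s + 1)) (Fin (s + 1)) (MvPowerSeries (Fin r ⊕ Fin (s + 1)) LH))
      (C_inv_hbar_mul_hbarC _) ht (hLq a)
  · simpa only [hΩ0, mL_one, one_mul] using hLt 0
end
end
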